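/- Let B be a d×d real matrix with B^T + B ≤ 0. Then B is Hurwitz (all eigenvalues have negative real part) if and only if V = {x : ‖e^{tB}x‖ = ‖x‖ for all t ∈ R} equals {0}. -/

import Mathlib

/-!
Write `A = Bᵀ + B ≤ 0` and `y(t) = e^{tB} x`. Then `d/dt ‖y‖² = ⟨y, A y⟩ ≤ 0`, so `‖y(t)‖` is
constant iff `A y(t) = 0` for all `t` (semidefiniteness), iff `A Bᵏ x = 0` for all `k`
(differentiate at `t = 0`; conversely `e^{tB}` is a limit of polynomials in `B`). Thus
`V = {x | ∀ k, A Bᵏ x = 0}`, the largest `B`-invariant subspace of `ker A`.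

If `B z = μ z`, then `z* A z = 2 Re μ ‖z‖²`; as `A ≤ 0` this forces `Re μ ≤ 0`, with equality iff
`A z = 0`, i.e. iff `z` lies in (the complexification of) `V`. So an eigenvalue on the imaginary
axis gives a nonzero vector of `V` (its real or imaginary part), and conversely the nonzero
`B`-invariant space `V ⊗ ℂ` contains an eigenvector, whose eigenvalue is then imaginary.
-/

open Matrix

/-- The Euclidean norm on `ℝ^d`. -/
noncomputable def eNorm {d : ℕ} (x : Fin d → ℝ) : ℝ := Real.sqrt (x ⬝ᵥ x)

open scoped MatrixOrder ComplexOrder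

section Calculus

variable {n 𝕜 : Type*} [Fintype n] [NontriviallyNormedField 𝕜]

theorem HasDerivAt.const_mulVec {m : Type*} {f : 𝕜 → n → 𝕜} {f' : n → 𝕜} {t : 𝕜}
    (hf : HasDerivAt f f' t) (C : Matrix m n 𝕜) :
    HasDerivAt (fun s => C *ᵥ f s) (C *ᵥ f') t :=
  hasDerivAt_pi.mpr fun i => by
    simpa only [mulVec, dotProduct] using
      HasDerivAt.fun_sum fun j _ => (hasDerivAt_pi.mp hf j).const_mul (C i j)

theorem HasDerivAt.dotProduct {f g : 𝕜 → n → 𝕜} {f' g' : n → 𝕜} {t : 𝕜}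
    (hf : HasDerivAt f f' t) (hg : HasDerivAt g g' t) :
    HasDerivAt (fun s => f s ⬝ᵥ g s) (f' ⬝ᵥ g t + f t ⬝ᵥ g') t := by
  simp only [_root_.dotProduct, ← Finset.sum_add_distrib]
  exact .fun_sum fun i _ => (hasDerivAt_pi.mp hf i).fun_mul (hasDerivAt_pi.mp hg i)

end Calculus

theorem Module.End.exists_hasEigenvector_mem_of_mapsTo {K V : Type*} [Field K] [IsAlgClosed K]
    [AddCommGroup V] [Module K V] [FiniteDimensional K V] (f : Module.End K V)
    {p : Submodule K V} (hp : p ≠ ⊥) (hfp : ∀ x ∈ p, f x ∈ p) :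
    ∃ μ, ∃ x ∈ p, f.HasEigenvector μ x := by
  have : Nontrivial p := Submodule.nontrivial_iff_ne_bot.mpr hp
  obtain ⟨μ, hμ⟩ := Module.End.exists_eigenvalue (f.restrict hfp)
  obtain ⟨y, hy⟩ := hμ.exists_hasEigenvector
  exact ⟨μ, y, y.2, f.eigenspace_restrict_le_eigenspace hfp μ ⟨y, hy.1, rfl⟩,
    by simpa using hy.2⟩

namespace Matrix

variable {m n : Type*} [Fintype n]

section UnobservableSubspace

variable {R : Type*} [DecidableEq n] [CommRing R]

/-- In control theory, the unobservable subspace of the pair `(C, A)`: the largest `A`-invariant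
subspace of `ker C`. -/
def unobservableSubspace (C : Matrix m n R) (A : Matrix n n R) : Submodule R (n → R) :=
  ⨅ k : ℕ, LinearMap.ker (C * A ^ k).mulVecLin

variable {C : Matrix m n R} {A : Matrix n n R} {x : n → R}

theorem mem_unobservableSubspace :
    x ∈ C.unobservableSubspace A ↔ ∀ k : ℕ, C *ᵥ (A ^ k *ᵥ x) = 0 := by
  simp [unobservableSubspace, mulVec_mulVec]

theorem mulVec_mem_unobservableSubspace (hx : x ∈ C.unobservableSubspace A) :
    A *ᵥ x ∈ C.unobservableSubspace A := by
  rw [mem_unobservableSubspace] at hx ⊢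
  intro k
  simpa [mulVec_mulVec, ← pow_succ] using hx (k + 1)

end UnobservableSubspace

theorem mem_spectrum_iff_hasEigenvalue_toLin' {K : Type*} [Field K] [DecidableEq n]
    {B : Matrix n n K} {μ : K} : μ ∈ spectrum K B ↔ Module.End.HasEigenvalue (toLin' B) μ := by
  rw [← spectrum_toLin', Module.End.hasEigenvalue_iff_mem_spectrum]

theorem exp_mulVec_mem_of_forall_pow_mulVec_mem {𝕂 : Type*} [RCLike 𝕂] [DecidableEq n]
    {p : Submodule 𝕂 (n → 𝕂)} {A : Matrix n n 𝕂} {x : n → 𝕂} (h : ∀ k : ℕ, A ^ k *ᵥ x ∈ p) :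
    NormedSpace.exp A *ᵥ x ∈ p := by
  let S : Submodule 𝕂 (Matrix n n 𝕂) := p.comap ((mulVecBilin 𝕂 𝕂).flip x)
  have hS : IsClosed (S : Set (Matrix n n 𝕂)) :=
    p.closed_of_finiteDimensional.preimage (LinearMap.continuous_of_finiteDimensional _)
  change NormedSpace.exp A ∈ S
  rw [NormedSpace.exp_eq_tsum 𝕂]
  exact tsum_mem hS fun k => S.smul_mem _ (h k)

theorem posSemidef_neg_transpose_add_self_iff {A : Matrix n n ℝ} :
    (-(Aᵀ + A)).PosSemidef ↔ ∀ x : n → ℝ, x ⬝ᵥ ((Aᵀ + A) *ᵥ x) ≤ 0 := by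
  have hA : (-(Aᵀ + A)).IsHermitian := by
    simp [IsHermitian, conjTranspose_eq_transpose_of_trivial, add_comm]
  simp only [posSemidef_iff_dotProduct_mulVec, star_trivial, neg_mulVec, dotProduct_neg,
    neg_nonneg, and_iff_right hA]

open scoped Matrix.Norms.L2Operator in
theorem PosSemidef.map_ofReal {A : Matrix n n ℝ} (hA : A.PosSemidef) :
    (A.map Complex.ofReal).PosSemidef := by
  classical
  obtain ⟨C, rfl⟩ := CStarAlgebra.nonneg_iff_eq_star_mul_self.mp hA.nonneg
  convert posSemidef_conjTranspose_mul_self (C.map Complex.ofReal) using 1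
  ext i j
  simp [Matrix.mul_apply]

section Complexification

theorem re_mulVec_map_ofReal (M : Matrix m n ℝ) (z : n → ℂ) :
    Complex.re ∘ (M.map Complex.ofReal *ᵥ z) = M *ᵥ (Complex.re ∘ z) := by
  ext i
  simp [mulVec, dotProduct, Complex.re_sum]

theorem im_mulVec_map_ofReal (M : Matrix m n ℝ) (z : n → ℂ) :
    Complex.im ∘ (M.map Complex.ofReal *ᵥ z) = M *ᵥ (Complex.im ∘ z) := by
  ext i
  simp [mulVec, dotProduct, Complex.im_sum]

theorem mulVec_map_ofReal_eq_zero_iff {M : Matrix m n ℝ} {z : n → ℂ} :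
    M.map Complex.ofReal *ᵥ z = 0 ↔ M *ᵥ (Complex.re ∘ z) = 0 ∧ M *ᵥ (Complex.im ∘ z) = 0 := by
  rw [← re_mulVec_map_ofReal, ← im_mulVec_map_ofReal]
  constructor
  · intro h
    simp [h]
  · rintro ⟨hre, him⟩
    ext i
    exact Complex.ext (congrFun hre i) (congrFun him i)

variable [DecidableEq n] {C : Matrix m n ℝ} {A : Matrix n n ℝ}

theorem mem_unobservableSubspace_map_ofReal_iff {z : n → ℂ} :
    z ∈ (C.map Complex.ofReal).unobservableSubspace (A.map Complex.ofReal) ↔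
      Complex.re ∘ z ∈ C.unobservableSubspace A ∧ Complex.im ∘ z ∈ C.unobservableSubspace A := by
  simp only [mem_unobservableSubspace, mulVec_mulVec, ← forall_and]
  refine forall_congr' fun k => ?_
  rw [← mulVec_map_ofReal_eq_zero_iff]
  have hmap : (C * A ^ k).map Complex.ofRealHom =
      C.map Complex.ofRealHom * A.map Complex.ofRealHom ^ k := by
    rw [Matrix.map_mul, ← RingHom.mapMatrix_apply, map_pow, RingHom.mapMatrix_apply]
  exact Iff.of_eq (congrArg (fun M => M *ᵥ z = 0) hmap.symm)

theorem unobservableSubspace_map_ofReal_eq_bot_iff :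
    (C.map Complex.ofReal).unobservableSubspace (A.map Complex.ofReal) = ⊥ ↔
      C.unobservableSubspace A = ⊥ := by
  simp only [Submodule.eq_bot_iff, mem_unobservableSubspace_map_ofReal_iff]
  constructor
  · intro h x hx
    have hre : Complex.re ∘ ((↑) ∘ x : n → ℂ) = x := by ext; simp
    have him : Complex.im ∘ ((↑) ∘ x : n → ℂ) = 0 := by ext; simp
    have := h _ ⟨hre ▸ hx, him ▸ zero_mem _⟩
    ext i
    simpa using congrFun this i
  · intro h z ⟨hre, him⟩
    ext i
    exact Complex.ext (congrFun (h _ hre) i) (congrFun (h _ him) i)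

end Complexification

section Dissipative

variable {B : Matrix n n ℂ} {μ : ℂ} {z : n → ℂ}

theorem star_dotProduct_conjTranspose_add_mulVec (hz : B *ᵥ z = μ • z) :
    star z ⬝ᵥ ((Bᴴ + B) *ᵥ z) = (2 * μ.re : ℝ) * (star z ⬝ᵥ z) := by
  rw [add_mulVec, dotProduct_add, dotProduct_mulVec, vecMul_conjTranspose, star_star, hz,
    star_smul, smul_dotProduct, dotProduct_smul, smul_eq_mul, smul_eq_mul, ← add_mul, add_comm,
    Complex.star_def, Complex.add_conj]

variable [DecidableEq n]

theorem exists_re_eq_zero_of_unobservableSubspace_ne_bot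
    (h : (Bᴴ + B).unobservableSubspace B ≠ ⊥) : ∃ μ ∈ spectrum ℂ B, μ.re = 0 := by
  obtain ⟨μ, z, hzU, hz⟩ :=
    Module.End.exists_hasEigenvector_mem_of_mapsTo (toLin' B) h
      fun _ => mulVec_mem_unobservableSubspace
  refine ⟨μ, mem_spectrum_iff_hasEigenvalue_toLin'.mpr
    (Module.End.hasEigenvalue_of_hasEigenvector hz), ?_⟩
  have hAz : (Bᴴ + B) *ᵥ z = 0 := by simpa using mem_unobservableSubspace.mp hzU 0
  have hquad := star_dotProduct_conjTranspose_add_mulVec (by simpa using hz.apply_eq_smul)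
  rw [hAz, dotProduct_zero] at hquad
  simpa [dotProduct_star_self_eq_zero, hz.2] using hquad

theorem unobservableSubspace_ne_bot_of_re_nonneg (hB : (-(Bᴴ + B)).PosSemidef)
    (hμ : μ ∈ spectrum ℂ B) (hre : 0 ≤ μ.re) : (Bᴴ + B).unobservableSubspace B ≠ ⊥ := by
  obtain ⟨z, hz⟩ := (mem_spectrum_iff_hasEigenvalue_toLin'.mp hμ).exists_hasEigenvector
  have hBz : B *ᵥ z = μ • z := by simpa using hz.apply_eq_smul
  have hquad : star z ⬝ᵥ ((Bᴴ + B) *ᵥ z) = 0 := by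
    refine le_antisymm ?_ ?_
    · simpa only [neg_mulVec, dotProduct_neg, neg_nonneg] using hB.dotProduct_mulVec_nonneg z
    · rw [star_dotProduct_conjTranspose_add_mulVec hBz]
      exact mul_nonneg (by exact_mod_cast by positivity) (dotProduct_star_self_nonneg z)
  have hAz : (Bᴴ + B) *ᵥ z = 0 := by
    simpa only [neg_mulVec, neg_eq_zero] using
      (hB.dotProduct_mulVec_zero_iff z).mp (by rw [neg_mulVec, dotProduct_neg, hquad, neg_zero])
  refine (Submodule.ne_bot_iff _).mpr ⟨z, mem_unobservableSubspace.mpr fun k => ?_, hz.2⟩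
  have hpow : B ^ k *ᵥ z = μ ^ k • z := by
    simpa [← toLin'_pow] using hz.pow_apply k
  rw [hpow, mulVec_smul, hAz, smul_zero]

theorem forall_re_neg_iff_unobservableSubspace_eq_bot (hB : (-(Bᴴ + B)).PosSemidef) :
    (∀ μ ∈ spectrum ℂ B, μ.re < 0) ↔ (Bᴴ + B).unobservableSubspace B = ⊥ := by
  constructor
  · intro h
    by_contra hne
    obtain ⟨μ, hμ, hre⟩ := exists_re_eq_zero_of_unobservableSubspace_ne_bot hne
    exact (h μ hμ).ne hre
  · intro h μ hμ
    by_contra hre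
    exact unobservableSubspace_ne_bot_of_re_nonneg hB hμ (not_lt.mp hre) h

end Dissipative

section Flow

attribute [local instance] Matrix.linftyOpNormedRing Matrix.linftyOpNormedAlgebra

open NormedSpace

variable [DecidableEq n]

theorem hasDerivAt_exp_smul_mulVec (A : Matrix n n ℝ) (x : n → ℝ) (t : ℝ) :
    HasDerivAt (fun s : ℝ => exp (s • A) *ᵥ x) (A *ᵥ (exp (t • A) *ᵥ x)) t := by
  rw [mulVec_mulVec]
  exact (LinearMap.toContinuousLinearMap ((mulVecBilin ℝ ℝ).flip x)).hasFDerivAt.comp_hasDerivAt t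
    (hasDerivAt_exp_smul_const' A t)

theorem forall_mulVec_exp_smul_mulVec_eq_zero_iff [Fintype m] {C : Matrix m n ℝ}
    {A : Matrix n n ℝ} {x : n → ℝ} :
    (∀ t : ℝ, C *ᵥ (exp (t • A) *ᵥ x) = 0) ↔ x ∈ C.unobservableSubspace A := by
  rw [mem_unobservableSubspace]
  constructor
  · intro h k
    have hk : ∀ t : ℝ, (C * A ^ k) *ᵥ (exp (t • A) *ᵥ x) = 0 := by
      induction k with
      | zero => simpa using h
      | succ k ih =>
        intro t
        have hderiv := (hasDerivAt_exp_smul_mulVec A x t).const_mulVec (C * A ^ k)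
        have := hderiv.unique (by simpa only [ih] using hasDerivAt_const t (0 : m → ℝ))
        simpa only [pow_succ, Matrix.mul_assoc, mulVec_mulVec] using this
    simpa [mulVec_mulVec] using hk 0
  · intro h t
    refine exp_mulVec_mem_of_forall_pow_mulVec_mem (p := LinearMap.ker C.mulVecLin) fun k => ?_
    rw [LinearMap.mem_ker, mulVecLin_apply, smul_pow, smul_mulVec, mulVec_smul, h k, smul_zero]

theorem hasDerivAt_dotProduct_self_exp_smul_mulVec (A : Matrix n n ℝ) (x : n → ℝ) (t : ℝ) :
    HasDerivAt (fun s : ℝ => (exp (s • A) *ᵥ x) ⬝ᵥ (exp (s • A) *ᵥ x))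
      ((exp (t • A) *ᵥ x) ⬝ᵥ ((Aᵀ + A) *ᵥ (exp (t • A) *ᵥ x))) t := by
  set y := exp (t • A) *ᵥ x
  have hsymm : (A *ᵥ y) ⬝ᵥ y + y ⬝ᵥ (A *ᵥ y) = y ⬝ᵥ ((Aᵀ + A) *ᵥ y) := by
    rw [add_mulVec, dotProduct_add, mulVec_transpose, dotProduct_comm y (y ᵥ* A),
      ← dotProduct_mulVec, dotProduct_comm (A *ᵥ y)]
  rw [← hsymm]
  exact (hasDerivAt_exp_smul_mulVec A x t).dotProduct (hasDerivAt_exp_smul_mulVec A x t)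

theorem forall_dotProduct_self_exp_smul_mulVec_eq_iff {A : Matrix n n ℝ}
    (hA : (-(Aᵀ + A)).PosSemidef) {x : n → ℝ} :
    (∀ t : ℝ, (exp (t • A) *ᵥ x) ⬝ᵥ (exp (t • A) *ᵥ x) = x ⬝ᵥ x) ↔
      x ∈ (Aᵀ + A).unobservableSubspace A := by
  rw [← forall_mulVec_exp_smul_mulVec_eq_zero_iff]
  have hzero {y : n → ℝ} : y ⬝ᵥ ((Aᵀ + A) *ᵥ y) = 0 ↔ (Aᵀ + A) *ᵥ y = 0 := by
    simpa only [star_trivial, neg_mulVec, dotProduct_neg, neg_eq_zero] using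
      hA.dotProduct_mulVec_zero_iff y
  constructor
  · intro h t
    rw [← hzero]
    refine (hasDerivAt_dotProduct_self_exp_smul_mulVec A x t).unique ?_
    simpa only [h] using hasDerivAt_const t (x ⬝ᵥ x)
  · intro h t
    have hderiv (s : ℝ) := hasDerivAt_dotProduct_self_exp_smul_mulVec A x s
    simp only [h, dotProduct_zero] at hderiv
    simpa using is_const_of_deriv_eq_zero (fun s => (hderiv s).differentiableAt)
      (fun s => (hderiv s).deriv) t 0

end Flow

end Matrix

theorem eNorm_eq_eNorm_iff {d : ℕ} {x y : Fin d → ℝ} : eNorm x = eNorm y ↔ x ⬝ᵥ x = y ⬝ᵥ y := by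
  have hnonneg (v : Fin d → ℝ) : 0 ≤ v ⬝ᵥ v := by simpa using dotProduct_star_self_nonneg v
  exact Real.sqrt_inj (hnonneg x) (hnonneg y)

/-- `B` is Hurwitz (every complex eigenvalue has negative real part) iff
`V = {x : ‖e^{tB}x‖ = ‖x‖ ∀ t}` is trivial. -/
theorem hurwitz_iff_norm_preserved_trivial {d : ℕ} (B : Matrix (Fin d) (Fin d) ℝ)
    (hB : ∀ x : Fin d → ℝ, x ⬝ᵥ ((Bᵀ + B).mulVec x) ≤ 0) :
    (∀ μ ∈ spectrum ℂ (B.map (fun r => (r : ℂ))), μ.re < 0) ↔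
      (∀ x : Fin d → ℝ,
        (∀ t : ℝ, eNorm ((NormedSpace.exp (t • B)).mulVec x) = eNorm x) → x = 0) := by
  have hdiss : (-(Bᵀ + B)).PosSemidef := posSemidef_neg_transpose_add_self_iff.mpr hB
  have hmap : (B.map Complex.ofReal)ᴴ + B.map Complex.ofReal = (Bᵀ + B).map Complex.ofReal := by
    ext i j
    simp
  have hdissC : (-((B.map Complex.ofReal)ᴴ + B.map Complex.ofReal)).PosSemidef := by
    rw [hmap, ← Matrix.map_neg _ Complex.ofReal_neg]
    exact hdiss.map_ofReal
  rw [forall_re_neg_iff_unobservableSubspace_eq_bot hdissC, hmap,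
    unobservableSubspace_map_ofReal_eq_bot_iff, Submodule.eq_bot_iff]
  simp only [eNorm_eq_eNorm_iff, forall_dotProduct_self_exp_smul_mulVec_eq_iff hdiss]
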